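/- Let G be a Young function, r > 0, and let (u_n) be a sequence of radially symmetric measurable functions on ℝ^N (N ≥ 2) with ∫_{ℝ^N} G(|u_n|) dx ≤ C for all n. Then sup over n of ∫_{B_r(y)} G(|u_n|) dx ≤ C/γ(y), where γ(y) is the maximal number of pairwise disjoint balls B_r(y_i) with centers y_i on the sphere {|x| = |y|}; in particular this supremum tends to 0 as |y| → ∞. -/

import Mathlib

open Set Filter Metric MeasureTheory ENNReal

/-- A Young function: continuous, convex, strictly increasing on `[0,∞)`,
vanishing at `0`. -/
def IsYoung (G : ℝ → ℝ) : Prop :=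
  ContinuousOn G (Set.Ici 0) ∧ ConvexOn ℝ (Set.Ici 0) G ∧
    StrictMonoOn G (Set.Ici 0) ∧ G 0 = 0

/-- `gam N r y` is the maximal number `j` of points on the sphere of radius `‖y‖`
whose `r`-balls are pairwise disjoint. -/
noncomputable def gam (N : ℕ) (r : ℝ) (y : EuclideanSpace ℝ (Fin N)) : ℕ :=
  sSup {j : ℕ | ∃ c : Fin j → EuclideanSpace ℝ (Fin N),
    (∀ i, ‖c i‖ = ‖y‖) ∧
    Pairwise fun i k => Disjoint (Metric.ball (c i) r) (Metric.ball (c k) r)}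

/-!
Rotations preserve Lebesgue measure and radial functions, so for radial `f` all balls `B_r(c)`
with `‖c‖ = ‖y‖` carry the same integral as `B_r(y)`. If `j` of them are pairwise disjoint,
`j • ∫_{B_r(y)} f ≤ ∫ f`, which gives the bound by `γ(y)`. The decay follows because a sphere
of radius `R` in dimension `≥ 2` holds `⌊R / 2r⌋` disjoint `r`-balls centred on it, stacked
along one axis.
-/

open scoped RealInnerProductSpace

/-- `hab` is only needed for `n = 0`, where `b / 0 = ∞` unless `b = 0`. -/
lemma ENNReal.le_div_natCast_of_mul_le {a b : ℝ≥0∞} {n : ℕ} (h : n * a ≤ b) (hab : a ≤ b) :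
    a ≤ b / n := by
  rcases eq_or_ne n 0 with rfl | hn
  · rcases eq_or_ne b 0 with rfl | hb
    · simpa using hab
    · simp [ENNReal.div_zero hb]
  · rwa [ENNReal.le_div_iff_mul_le (Or.inl (by exact_mod_cast hn)) (Or.inl (natCast_ne_top n)),
      mul_comm]

def IsRadial {E α : Type*} [Norm E] (f : E → α) : Prop :=
  ∀ x z, ‖x‖ = ‖z‖ → f x = f z

lemma IsRadial.comp {E α β : Type*} [Norm E] {f : E → α} (hf : IsRadial f) (g : α → β) :
    IsRadial (g ∘ f) :=
  fun x z h => congrArg g (hf x z h)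

section Radial

variable {E : Type*} [NormedAddCommGroup E] [InnerProductSpace ℝ E] [FiniteDimensional ℝ E]

/-- The centers are `√(R² - b²) e + b f` with `b = 0, 2r, …, 2r(m-1)`: their `f`-coordinates
are `2r` apart. -/
lemma exists_disjoint_balls_on_sphere (hE : 2 ≤ Module.finrank ℝ E) {r : ℝ} (hr : 0 ≤ r)
    {m : ℕ} {R : ℝ} (hR : 2 * r * m ≤ R) :
    ∃ c : Fin m → E, (∀ i, ‖c i‖ = R) ∧
      Pairwise fun i k => Disjoint (ball (c i) r) (ball (c k) r) := by
  let B := stdOrthonormalBasis ℝ E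
  let e := B ⟨0, by omega⟩
  let f := B ⟨1, by omega⟩
  have he : ‖e‖ = 1 := B.orthonormal.1 _
  have hf : ‖f‖ = 1 := B.orthonormal.1 _
  have hef : ⟪e, f⟫ = 0 := B.orthonormal.2 (by simp [Fin.ext_iff])
  let b : Fin m → ℝ := fun k => 2 * r * k
  have hb : ∀ k, 0 ≤ b k ∧ b k ≤ R := fun k =>
    ⟨by positivity,
      (mul_le_mul_of_nonneg_left (by exact_mod_cast k.2.le) (by positivity)).trans hR⟩
  let c : Fin m → E := fun k => √(R ^ 2 - b k ^ 2) • e + b k • f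
  refine ⟨c, fun k => ?_, fun i k hik => ball_disjoint_ball ?_⟩
  · have hsq : ‖c k‖ ^ 2 = R ^ 2 := by
      rw [norm_add_sq_real, inner_smul_left, inner_smul_right, hef, norm_smul, norm_smul, he, hf,
        mul_one, mul_one, Real.norm_eq_abs, Real.norm_eq_abs, sq_abs, sq_abs,
        Real.sq_sqrt (by nlinarith [hb k])]
      ring
    exact (pow_left_inj₀ (norm_nonneg _) ((hb k).1.trans (hb k).2) two_ne_zero).1 hsq
  · have hcoord : ∀ k, ⟪c k, f⟫ = b k := fun k => by
      simp [c, inner_add_left, inner_smul_left, hef, hf]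
    have hgap : 2 * r ≤ |b i - b k| := by
      have : (1 : ℝ) ≤ |(i : ℝ) - k| := by
        have : (i : ℤ) ≠ k := fun h => hik (Fin.ext (by exact_mod_cast h))
        exact_mod_cast Int.one_le_abs (sub_ne_zero.2 this)
      calc 2 * r = 2 * r * 1 := by ring
        _ ≤ 2 * r * |(i : ℝ) - k| := by gcongr
        _ = |b i - b k| := by simp [b, ← mul_sub, abs_mul, abs_of_nonneg hr]
    calc r + r = 2 * r := by ring
      _ ≤ |b i - b k| := hgap
      _ = |⟪c i - c k, f⟫| := by rw [inner_sub_left, hcoord, hcoord]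
      _ ≤ ‖c i - c k‖ * ‖f‖ := abs_real_inner_le_norm _ _
      _ = dist (c i) (c k) := by rw [hf, mul_one, dist_eq_norm]

variable [MeasurableSpace E] [BorelSpace E]

/-- The reflection exchanging `y` and `c` preserves both `f` and the volume. -/
lemma IsRadial.setLIntegral_ball_eq {f : E → ℝ≥0∞} (hf : IsRadial f) {y c : E}
    (h : ‖c‖ = ‖y‖) (r : ℝ) :
    ∫⁻ x in ball c r, f x = ∫⁻ x in ball y r, f x := by
  set T : E ≃ₗᵢ[ℝ] E := Submodule.reflection (ℝ ∙ (y - c))ᗮ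
  have hTy : T y = c := Submodule.reflection_sub h.symm
  have hpre : T ⁻¹' ball c r = ball y r := by
    ext x
    simp [← hTy, dist_eq_norm]
  rw [← T.measurePreserving.setLIntegral_comp_preimage_emb
    T.toHomeomorph.measurableEmbedding f (ball c r), hpre]
  exact setLIntegral_congr_fun measurableSet_ball fun x _ => hf _ _ (T.norm_map x)

lemma IsRadial.card_mul_setLIntegral_ball_le {f : E → ℝ≥0∞} (hf : IsRadial f) {y : E} {r : ℝ}
    {j : ℕ} {c : Fin j → E} (hc : ∀ i, ‖c i‖ = ‖y‖)
    (hd : Pairwise fun i k => Disjoint (ball (c i) r) (ball (c k) r)) :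
    j * ∫⁻ x in ball y r, f x ≤ ∫⁻ x, f x :=
  calc j * ∫⁻ x in ball y r, f x
      = ∑ i, ∫⁻ x in ball (c i) r, f x := by
        simp [hf.setLIntegral_ball_eq (hc _)]
    _ = ∫⁻ x in ⋃ i, ball (c i) r, f x := by
        rw [lintegral_iUnion (fun _ => measurableSet_ball) hd, tsum_fintype]
    _ ≤ ∫⁻ x, f x := setLIntegral_le_lintegral _ f

lemma IsRadial.setLIntegral_ball_le_div_floor (hE : 2 ≤ Module.finrank ℝ E) {f : E → ℝ≥0∞}
    (hf : IsRadial f) {r : ℝ} (hr : 0 < r) (y : E) :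
    ∫⁻ x in ball y r, f x ≤ (∫⁻ x, f x) / ⌊‖y‖ / (2 * r)⌋₊ := by
  have hm : 2 * r * ⌊‖y‖ / (2 * r)⌋₊ ≤ ‖y‖ := by
    rw [← le_div_iff₀' (by positivity)]
    exact Nat.floor_le (by positivity)
  obtain ⟨c, hc, hd⟩ := exists_disjoint_balls_on_sphere hE hr.le hm
  exact ENNReal.le_div_natCast_of_mul_le (hf.card_mul_setLIntegral_ball_le hc hd)
    (setLIntegral_le_lintegral _ f)

end Radial

lemma IsRadial.setLIntegral_ball_le_div_gam {N : ℕ} {f : EuclideanSpace ℝ (Fin N) → ℝ≥0∞}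
    (hf : IsRadial f) (r : ℝ) (y : EuclideanSpace ℝ (Fin N)) :
    ∫⁻ x in ball y r, f x ≤ (∫⁻ x, f x) / gam N r y := by
  refine ENNReal.le_div_natCast_of_mul_le ?_ (setLIntegral_le_lintegral _ f)
  set S := {j : ℕ | ∃ c : Fin j → EuclideanSpace ℝ (Fin N),
    (∀ i, ‖c i‖ = ‖y‖) ∧ Pairwise fun i k => Disjoint (ball (c i) r) (ball (c k) r)}
  by_cases hS : BddAbove S
  · obtain ⟨c, hc, hd⟩ :=
      Nat.sSup_mem (s := S) ⟨0, Fin.elim0, fun i => i.elim0, fun i => i.elim0⟩ hS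
    exact hf.card_mul_setLIntegral_ball_le hc hd
  · -- junk value: the `sSup` of an unbounded set of naturals is `0`
    change ((sSup S : ℕ) : ℝ≥0∞) * _ ≤ _
    simp [csSup_of_not_bddAbove hS]

theorem stmt_11_general {N : ℕ} (hN : 2 ≤ N) (G : ℝ → ℝ)
    (r : ℝ) (hr : 0 < r) (C : ℝ)
    (u : ℕ → EuclideanSpace ℝ (Fin N) → ℝ)
    (hrad : ∀ n, ∀ x y : EuclideanSpace ℝ (Fin N), ‖x‖ = ‖y‖ → u n x = u n y)
    (hbdd : ∀ n, (∫⁻ x, ENNReal.ofReal (G |u n x|)) ≤ ENNReal.ofReal C) :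
    (∀ y : EuclideanSpace ℝ (Fin N), r < ‖y‖ →
      (⨆ n, ∫⁻ x in Metric.ball y r, ENNReal.ofReal (G |u n x|)) ≤
        ENNReal.ofReal C / (gam N r y : ℝ≥0∞)) ∧
    Filter.Tendsto
      (fun y : EuclideanSpace ℝ (Fin N) =>
        ⨆ n, ∫⁻ x in Metric.ball y r, ENNReal.ofReal (G |u n x|))
      (Filter.comap (fun y => ‖y‖) Filter.atTop) (nhds 0) := by
  have hf : ∀ n, IsRadial fun x => ENNReal.ofReal (G |u n x|) :=
    fun n => IsRadial.comp (hrad n) fun t => ENNReal.ofReal (G |t|)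
  have hE : 2 ≤ Module.finrank ℝ (EuclideanSpace ℝ (Fin N)) := by simpa using hN
  refine ⟨fun y _ => iSup_le fun n =>
    ((hf n).setLIntegral_ball_le_div_gam r y).trans (ENNReal.div_le_div_right (hbdd n) _), ?_⟩
  have hfloor : Tendsto (fun y : EuclideanSpace ℝ (Fin N) => ⌊‖y‖ / (2 * r)⌋₊)
      (comap (fun y => ‖y‖) atTop) atTop :=
    tendsto_nat_floor_atTop.comp (tendsto_comap.atTop_div_const (by positivity))
  have hbound : Tendsto (fun y : EuclideanSpace ℝ (Fin N) =>
      ENNReal.ofReal C / ⌊‖y‖ / (2 * r)⌋₊) (comap (fun y => ‖y‖) atTop) (nhds 0) := by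
    simpa using ENNReal.Tendsto.const_div (tendsto_nat_nhds_top.comp hfloor)
      (Or.inr ofReal_ne_top)
  refine tendsto_of_tendsto_of_tendsto_of_le_of_le tendsto_const_nhds hbound
    (fun _ => zero_le) fun y => iSup_le fun n => ?_
  exact ((hf n).setLIntegral_ball_le_div_floor hE hr y).trans
    (ENNReal.div_le_div_right (hbdd n) _)

theorem stmt_11 {N : ℕ} (hN : 2 ≤ N) (G : ℝ → ℝ) (hGY : IsYoung G)
    (r : ℝ) (hr : 0 < r) (C : ℝ) (hC : 0 < C)
    (u : ℕ → EuclideanSpace ℝ (Fin N) → ℝ)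
    (hmeas : ∀ n, Measurable (u n))
    (hrad : ∀ n, ∀ x y : EuclideanSpace ℝ (Fin N), ‖x‖ = ‖y‖ → u n x = u n y)
    (hbdd : ∀ n, (∫⁻ x, ENNReal.ofReal (G |u n x|)) ≤ ENNReal.ofReal C) :
    (∀ y : EuclideanSpace ℝ (Fin N), r < ‖y‖ →
      (⨆ n, ∫⁻ x in Metric.ball y r, ENNReal.ofReal (G |u n x|)) ≤
        ENNReal.ofReal C / (gam N r y : ℝ≥0∞)) ∧
    Filter.Tendsto
      (fun y : EuclideanSpace ℝ (Fin N) =>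
        ⨆ n, ∫⁻ x in Metric.ball y r, ENNReal.ofReal (G |u n x|))
      (Filter.comap (fun y => ‖y‖) Filter.atTop) (nhds 0) :=
  stmt_11_general hN G r hr C u hrad hbdd
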